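/- For every n ≥ 3 and ℓ ≥ 1, if a coloring c of χ^{ℓ+1}(σ) with values in {0,…,n−1} is consistent and complete with the set agreement valency map val on χ^ℓ(σ), then c is a Sperner coloring of χ^{ℓ+1}(σ), i.e., c(v) ∈ carr({v}) for every vertex v of χ^{ℓ+1}(σ). -/

import Mathlib

open scoped Classical

/-- Vertices of the ℓ-th chromatic subdivision of the standard simplex on `Fin n`. -/
def ChromV (n : ℕ) : ℕ → Type
  | 0 => Fin n
  | ℓ + 1 => Fin n × Finset (ChromV n ℓ)

instance chromVDecEq (n : ℕ) : ∀ ℓ, DecidableEq (ChromV n ℓ)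
  | 0 => inferInstanceAs (DecidableEq (Fin n))
  | ℓ + 1 =>
    letI := chromVDecEq n ℓ
    inferInstanceAs (DecidableEq (Fin n × Finset (ChromV n ℓ)))

/-- The color of a vertex of the ℓ-th chromatic subdivision. -/
def chromCol (n : ℕ) : ∀ ℓ, ChromV n ℓ → Fin n
  | 0, v => v
  | _ + 1, v => v.1

/-- `ids γ`: the set of colors of the vertices of a simplex `γ`. -/
def ids {n ℓ : ℕ} (γ : Finset (ChromV n ℓ)) : Finset (Fin n) :=
  γ.image (chromCol n ℓ)

/-- One step of standard chromatic subdivision of a set of (nonempty) simplexes. -/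
def subdiv {α : Type} {n : ℕ} (col : α → Fin n) (K : Set (Finset α)) :
    Set (Finset (Fin n × Finset α)) :=
  { s | s.Nonempty ∧
    (∀ v ∈ s, v.2 ∈ K ∧ v.1 ∈ v.2.image col) ∧
    (∀ u ∈ s, ∀ v ∈ s, u ≠ v → u.1 ≠ v.1) ∧
    (∀ u ∈ s, ∀ v ∈ s, u.2 ⊆ v.2 ∨ v.2 ⊆ u.2) ∧
    (∀ u ∈ s, ∀ v ∈ s, u.1 ∈ v.2.image col → u.2 ⊆ v.2) }

/-- The faces of a simplex `τ`: its nonempty subsets. -/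
def facesOf {α : Type} (τ : Finset α) : Set (Finset α) :=
  { s | s.Nonempty ∧ s ⊆ τ }

/-- The ℓ-th chromatic subdivision `χ^ℓ(ρ)` of a face `ρ` of σ,
as a subcomplex of `χ^ℓ(σ)`. -/
def chromSub (n : ℕ) (ρ : Finset (Fin n)) : ∀ ℓ, Set (Finset (ChromV n ℓ))
  | 0 => facesOf ρ
  | ℓ + 1 => subdiv (chromCol n ℓ) (chromSub n ρ ℓ)

/-- Iterated chromatic subdivision of a subcomplex sitting at level ℓ. -/
def iterSub (n ℓ : ℕ) : ∀ m, Set (Finset (ChromV n ℓ)) → Set (Finset (ChromV n (ℓ + m)))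
  | 0, K => K
  | m + 1, K => subdiv (chromCol n (ℓ + m)) (iterSub n ℓ m K)

/-- `χ^m(τ)` for a simplex `τ ∈ χ^ℓ(σ)`: the subcomplex of `χ^{ℓ+m}(σ)` obtained by
iterated subdivision of `τ` and its faces. -/
def subOf {n ℓ : ℕ} (m : ℕ) (τ : Finset (ChromV n ℓ)) : Set (Finset (ChromV n (ℓ + m))) :=
  iterSub n ℓ m (facesOf τ)

/-- The vertices of a subcomplex. -/
def vertexSet {n ℓ : ℕ} (L : Set (Finset (ChromV n ℓ))) : Set (ChromV n ℓ) :=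
  { v | ∃ s ∈ L, v ∈ s }

/-- `c(L)`: the set of values taken by a coloring `c` on the vertices of a subcomplex `L`. -/
def colorSet {n ℓ : ℕ} {β : Type} (c : ChromV n ℓ → β) (L : Set (Finset (ChromV n ℓ))) :
    Set β :=
  c '' vertexSet L

/-- The carrier of a simplex `γ ∈ χ^ℓ(σ)`: the smallest face `ρ` of σ with `γ ∈ χ^ℓ(ρ)`,
realized as the intersection of all such faces. -/
noncomputable def carr {n ℓ : ℕ} (γ : Finset (ChromV n ℓ)) : Finset (Fin n) :=
  Finset.univ.filter fun i => ∀ ρ : Finset (Fin n), γ ∈ chromSub n ρ ℓ → i ∈ ρ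

/-- The set agreement valency map: `val(τ) = ids(τ)` if `|τ| ≤ n-2`, else `carr(τ)`. -/
noncomputable def saVal {n ℓ : ℕ} (τ : Finset (ChromV n ℓ)) : Finset (Fin n) :=
  if τ.card ≤ n - 2 then ids τ else carr τ

/-- The weak symmetry breaking valency map: `{1}` on simplexes of dimension ≤ n-3,
`{0,1}` otherwise. -/
def wsbVal {n ℓ : ℕ} (τ : Finset (ChromV n ℓ)) : Set (Fin 2) :=
  if τ.card ≤ n - 2 then {1} else Set.univ

/-- The simplicial map on the ℓ-th chromatic subdivision induced functorially by a
map `f` on the colors/vertices of σ. -/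
def vmap (n : ℕ) (f : Fin n → Fin n) : ∀ ℓ, ChromV n ℓ → ChromV n ℓ
  | 0, v => f v
  | ℓ + 1, v => (f v.1, v.2.image (vmap n f ℓ))

/-- The order-preserving bijection between two faces `s` and `t` of σ of the same
cardinality (extended by the identity elsewhere). -/
noncomputable def opBij {n : ℕ} (s t : Finset (Fin n)) (i : Fin n) : Fin n :=
  if h : i ∈ s ∧ s.card = t.card then
    ↑(t.orderIsoOfFin rfl (Fin.cast h.2 ((s.orderIsoOfFin rfl).symm ⟨i, h.1⟩)))
  else i

/-- A coloring of `χ^L(σ)` is symmetric if it is invariant under the order-preserving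
simplicial bijections between subdivided faces of σ of the same dimension. -/
def SymmColoring {n L : ℕ} {β : Type} (b : ChromV n L → β) : Prop :=
  ∀ s t : Finset (Fin n), s.Nonempty → t.Nonempty → s ≠ t → s.card = t.card →
    ∀ v ∈ vertexSet (chromSub n s L), b (vmap n (opBij s t) L v) = b v

/-- Transport of vertices along an equality of levels. -/
def castV (n : ℕ) {a b : ℕ} (h : a = b) : ChromV n a → ChromV n b :=
  fun v => h ▸ v

/-
Consistency at a vertex `v = (i, τ)` of `χ^{ℓ+1}(σ)` already forces Sperner: `{v}` is a simplex
of `χ¹(τ)`, so `c v ∈ val(τ)`. Both `ids(τ)` and `carr(τ)` lie in `carr(τ)`, and any face `ρ`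
with `v ∈ χ^{ℓ+1}(ρ)` has `τ ∈ χ^ℓ(ρ)`, whence `carr(τ) ⊆ carr({v})`.
-/

lemma singleton_mem_subdiv {α : Type} {n : ℕ} {col : α → Fin n} {K : Set (Finset α)}
    {v : Fin n × Finset α} (hK : v.2 ∈ K) (hv : v.1 ∈ v.2.image col) :
    {v} ∈ subdiv col K := by
  refine ⟨Finset.singleton_nonempty v, ?_, ?_, ?_, ?_⟩ <;> simp_all

lemma ids_subset_of_mem_chromSub {n : ℕ} {ρ : Finset (Fin n)} :
    ∀ {ℓ : ℕ} {τ : Finset (ChromV n ℓ)}, τ ∈ chromSub n ρ ℓ → ids τ ⊆ ρ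
  | 0, _, hτ => by
    intro i hi
    obtain ⟨v, hv, rfl⟩ := Finset.mem_image.1 hi
    exact hτ.2 hv
  | _ + 1, _, hτ => by
    intro i hi
    obtain ⟨v, hv, rfl⟩ := Finset.mem_image.1 hi
    obtain ⟨hvK, hvc⟩ := hτ.2.1 v hv
    exact ids_subset_of_mem_chromSub hvK hvc

lemma ids_subset_carr {n ℓ : ℕ} (τ : Finset (ChromV n ℓ)) : ids τ ⊆ carr τ :=
  fun _ hi =>
    Finset.mem_filter.2 ⟨Finset.mem_univ _, fun _ hρ => ids_subset_of_mem_chromSub hρ hi⟩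

lemma saVal_subset_carr {n ℓ : ℕ} (τ : Finset (ChromV n ℓ)) : saVal τ ⊆ carr τ := by
  unfold saVal
  split_ifs
  · exact ids_subset_carr τ
  · exact subset_rfl

lemma carr_subset_carr_singleton {n ℓ : ℕ} (v : ChromV n (ℓ + 1)) :
    carr v.2 ⊆ carr ({v} : Finset (ChromV n (ℓ + 1))) := by
  simp only [carr, Finset.subset_iff, Finset.mem_filter, Finset.mem_univ, true_and]
  exact fun _ hi ρ hρ => hi ρ (hρ.2.1 v (Finset.mem_singleton_self v)).1

lemma apply_mem_colorSet_subOf_one {n ℓ : ℕ} {β : Type} (c : ChromV n (ℓ + 1) → β)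
    {v : ChromV n (ℓ + 1)} (hv : v.1 ∈ ids v.2) : c v ∈ colorSet c (subOf 1 v.2) := by
  have hτ : v.2 ∈ facesOf v.2 := ⟨Finset.image_nonempty.1 ⟨_, hv⟩, subset_rfl⟩
  exact ⟨v, ⟨{v}, singleton_mem_subdiv hτ hv, Finset.mem_singleton_self v⟩, rfl⟩

theorem consistent_complete_is_sperner_general
    (n ℓ : ℕ)
    (c : ChromV n (ℓ + 1) → Fin n)
    (hcons : ∀ τ' ∈ chromSub n Finset.univ ℓ, colorSet c (subOf 1 τ') ⊆ ↑(saVal τ')) :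
    ∀ v ∈ vertexSet (chromSub n Finset.univ (ℓ + 1)),
      c v ∈ carr ({v} : Finset (ChromV n (ℓ + 1))) := by
  rintro v ⟨s, hs, hvs⟩
  obtain ⟨hτ, hcol⟩ := hs.2.1 v hvs
  have hval : c v ∈ saVal v.2 := hcons v.2 hτ (apply_mem_colorSet_subOf_one c hcol)
  exact carr_subset_carr_singleton v (saVal_subset_carr v.2 hval)

/-- any coloring consistent and complete with the set agreement valency
map is a Sperner coloring. -/
theorem consistent_complete_is_sperner
    (n ℓ : ℕ) (hn : 3 ≤ n) (hℓ : 1 ≤ ℓ)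
    (c : ChromV n (ℓ + 1) → Fin n)
    (hcons : ∀ τ' ∈ chromSub n Finset.univ ℓ, colorSet c (subOf 1 τ') ⊆ ↑(saVal τ'))
    (hcomp : ∀ τ' ∈ chromSub n Finset.univ ℓ, colorSet c (subOf 1 τ') = ↑(saVal τ')) :
    ∀ v ∈ vertexSet (chromSub n Finset.univ (ℓ + 1)),
      c v ∈ carr ({v} : Finset (ChromV n (ℓ + 1))) :=
  consistent_complete_is_sperner_general n ℓ c hcons
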